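/- Let m ∈ ℕ, y ∈ {0,…,m} and θ ∈ ℝ. Then the Logistic-Normal-Binomial probability mass converges to the binomial probability mass as the overdispersion parameter tends to zero from above: the function σ² ↦ ∫ Bin(y; m, φ(ψ)) dN(θ,σ²)(ψ), defined for σ² > 0, tends to Bin(y; m, φ(θ)) as σ² → 0⁺. That is, in the limit σ² → 0⁺ the LNB kernel collapses to the continuation-ratio (binomial) kernel. -/
import Mathlib


open Finset Real MeasureTheory ProbabilityTheory Filter Topology

/-- The standard logistic function `φ(u) = exp(u)/(1+exp(u))`. -/
noncomputable def logistic (u : ℝ) : ℝ := Real.exp u / (1 + Real.exp u)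

/-- The binomial probability mass function: `Bin(y; m, p) = C(m,y) p^y (1-p)^(m-y)`. -/
noncomputable def binPMF (m y : ℕ) (p : ℝ) : ℝ :=
  (m.choose y : ℝ) * p ^ y * (1 - p) ^ (m - y)

lemma logistic_continuous : Continuous logistic := by
  apply Continuous.div (Real.continuous_exp) (by continuity)
  intro x
  positivity

lemma logistic_mem (u : ℝ) : logistic u ∈ Set.Icc (0:ℝ) 1 := by
  have h : (0:ℝ) < 1 + Real.exp u := by positivity
  constructor
  · unfold logistic; positivity
  · rw [logistic, div_le_one h]; linarith [Real.exp_pos u]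

lemma binPMF_continuous (m y : ℕ) : Continuous (binPMF m y) := by
  unfold binPMF; continuity

lemma binPMF_logistic_bound (m y : ℕ) (u : ℝ) :
    |binPMF m y (logistic u)| ≤ (m.choose y : ℝ) := by
  obtain ⟨h0, h1⟩ := logistic_mem u
  set p := logistic u
  have hb : binPMF m y p ≤ (m.choose y : ℝ) := by
    calc (m.choose y : ℝ) * p ^ y * (1 - p) ^ (m - y)
        ≤ (m.choose y : ℝ) * 1 * 1 := by
          apply mul_le_mul
          · apply mul_le_mul le_rfl (pow_le_one₀ h0 h1) (by positivity) (by positivity)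
          · exact pow_le_one₀ (by linarith) (by linarith)
          · exact pow_nonneg (by linarith) _
          · positivity
      _ = (m.choose y : ℝ) := by ring
  have hnn : 0 ≤ binPMF m y p := by
    unfold binPMF
    have : (0:ℝ) ≤ 1 - p := by linarith
    positivity
  rwa [abs_of_nonneg hnn]

lemma gaussianReal_eq_map (θ : ℝ) (v : NNReal) :
    gaussianReal θ v
      = (gaussianReal 0 1).map (fun z => (NNReal.sqrt v : ℝ) * z + θ) := by
  have h1 : (gaussianReal 0 1).map (fun z => (NNReal.sqrt v : ℝ) * z)
      = gaussianReal 0 v := by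
    rw [gaussianReal_map_const_mul]
    congr 1
    · simp
    · ext
      simp [NNReal.sq_sqrt]
  have hm1 : Measurable (fun z : ℝ => (NNReal.sqrt v : ℝ) * z) :=
    (measurable_id.const_mul _)
  have hm2 : Measurable (fun z : ℝ => z + θ) := measurable_id.add_const _
  calc gaussianReal θ v = gaussianReal (0 + θ) v := by rw [zero_add]
    _ = (gaussianReal 0 v).map (· + θ) := (gaussianReal_map_add_const θ).symm
    _ = ((gaussianReal 0 1).map (fun z => (NNReal.sqrt v : ℝ) * z)).map (· + θ) := by rw [h1]
    _ = (gaussianReal 0 1).map (fun z => (NNReal.sqrt v : ℝ) * z + θ) := by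
        rw [Measure.map_map hm2 hm1]; rfl

/-- As the overdispersion parameter `σ² → 0⁺`, the Logistic-Normal-Binomial probability mass
`LNB(y; m, θ, σ²) = ∫ Bin(y; m, φ(ψ)) dN(θ,σ²)(ψ)` tends to the binomial probability mass
`Bin(y; m, φ(θ))`: the LNB kernel collapses to the continuation-ratio (binomial) kernel. -/
theorem LNB_tendsto_binomial (m y : ℕ) (hy : y ≤ m) (θ : ℝ) :
    Filter.Tendsto (fun v : NNReal => ∫ ψ, binPMF m y (logistic ψ) ∂(gaussianReal θ v))
      (nhdsWithin 0 (Set.Ioi 0)) (nhds (binPMF m y (logistic θ))) := by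
  have hfc : Continuous (fun ψ => binPMF m y (logistic ψ)) :=
    (binPMF_continuous m y).comp logistic_continuous
  have key : ∀ v : NNReal,
      ∫ ψ, binPMF m y (logistic ψ) ∂(gaussianReal θ v)
        = ∫ z, binPMF m y (logistic ((NNReal.sqrt v : ℝ) * z + θ)) ∂(gaussianReal 0 1) := by
    intro v
    rw [gaussianReal_eq_map θ v,
      integral_map (by fun_prop) hfc.aestronglyMeasurable]
  simp_rw [key]
  have hθ : binPMF m y (logistic θ)
      = ∫ _z, binPMF m y (logistic θ) ∂(gaussianReal 0 1) := by
    rw [integral_const]; simp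
  rw [hθ]
  apply tendsto_integral_filter_of_dominated_convergence
    (bound := fun _ => (m.choose y : ℝ))
  · filter_upwards with v using
      (hfc.comp (by continuity)).aestronglyMeasurable
  · filter_upwards with v
    filter_upwards with z using binPMF_logistic_bound m y _
  · exact integrable_const _
  · filter_upwards with z
    have hsqrt : Filter.Tendsto (fun v : NNReal => (NNReal.sqrt v : ℝ))
        (nhdsWithin 0 (Set.Ioi 0)) (nhds 0) := by
      have : Filter.Tendsto (fun v : NNReal => (NNReal.sqrt v : ℝ)) (nhds 0) (nhds 0) := by
        rw [show (0:ℝ) = ((0:NNReal):ℝ) by simp]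
        exact NNReal.tendsto_coe.2 (by simpa using NNReal.continuous_sqrt.tendsto 0)
      exact this.mono_left nhdsWithin_le_nhds
    have harg : Filter.Tendsto (fun v : NNReal => (NNReal.sqrt v : ℝ) * z + θ)
        (nhdsWithin 0 (Set.Ioi 0)) (nhds θ) := by
      have := (hsqrt.mul_const z).add_const θ
      simpa using this
    exact (hfc.tendsto θ).comp harg
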